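/- arXiv:math/0508614 — 3 statements merged into one kernel-verified Lean document; each statement's English description precedes it below -/
import Mathlib

section
/- If e_j ≥ 3 for all j, then for all n ≥ 0, 1/(2 m_{n+1}) < b_n < 4/m_{n+1}. -/
theorem stmt12 (e m : ℕ → ℤ) (b : ℕ → ℝ)
    (he : ∀ j, 1 ≤ j → 3 ≤ e j)
    (hm0 : m 0 = 0) (hm1 : m 1 = 1)
    (hm : ∀ j, 1 ≤ j → m (j + 1) = e j * m j - m (j - 1))
    (hb : ∀ j, b j = 1 / ((m (j + 1) : ℝ) - (m j : ℝ))) :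
    ∀ k, 1 / (2 * (m (k + 1) : ℝ)) < b k ∧ b k < 4 / (m (k + 1) : ℝ) := by
  have key : ∀ j, 0 ≤ m j ∧ 2 * m j ≤ m (j + 1) ∧ 1 ≤ m (j + 1) := by
    intro j
    induction j with
    | zero => simp [hm0, hm1]
    | succ n ih =>
      obtain ⟨h0, h2, h1⟩ := ih
      have hrec := hm (n + 1) (by omega)
      simp only [Nat.add_sub_cancel] at hrec
      have he3 := he (n + 1) (by omega)
      have : 3 * m (n + 1) ≤ e (n + 1) * m (n + 1) := by
        apply mul_le_mul_of_nonneg_right he3 (by omega)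
      refine ⟨by omega, by omega, by omega⟩
  intro k
  obtain ⟨h0, h2, h1⟩ := key k
  have hM : (1 : ℝ) ≤ (m (k + 1) : ℤ) := by exact_mod_cast h1
  have h0' : (0 : ℝ) ≤ (m k : ℤ) := by exact_mod_cast h0
  have h2' : 2 * ((m k : ℤ) : ℝ) ≤ ((m (k + 1) : ℤ) : ℝ) := by exact_mod_cast h2
  rw [hb k]
  set M : ℝ := ((m (k + 1) : ℤ) : ℝ)
  set A : ℝ := ((m k : ℤ) : ℝ)
  have hD : 0 < M - A := by linarith
  have hMpos : 0 < M := by linarith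
  constructor
  · rw [div_lt_div_iff₀ (by linarith) hD]
    linarith
  · rw [div_lt_div_iff₀ hD hMpos]
    linarith
end

section
/- Let η_α be the envelope of α: η_α(x) = 0 for x ≤ α, and η_α(x) = m_j x - n_j for x ∈ [a_j, a_{j-1}] (with a_{-1} = ∞, η_α(x) = 1 for x ≥ a_0 = 1). Then there is a constant Ω > 0 such that η_α(x) ≤ Ω·√(x - α) for all x ≥ α. -/
open Filter Topology

/-! Write `δ j = m j * α - n j`. The determinant identity `m j * n (j+1) - m (j+1) * n j = 1`
makes `n j / m j` increase to `α` in steps `1 / (m j * m (j+1))`, and `m (j+1) > 2 * m j` makes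
these steps decay at least like `4⁻ʲ`; hence `δ j ≍ 1 / m (j+1)`. Since
`a j - α = (δ j - δ (j+1)) / (m (j+1) - m j)`, also `a j - α ≍ 1 / m (j+1) ^ 2`.
On `[a j, a (j-1)]` the envelope is `m j * (x - α) + δ j`: the first term is `O(√(x - α))`
because `x - α ≤ a (j-1) - α = O(1 / m j ^ 2)`, the second because
`x - α ≥ a j - α ≫ 1 / m (j+1) ^ 2`. -/

theorem le_sub_and_sub_le_div_of_tendsto {r w : ℕ → ℝ} {α q : ℝ}
    (hr : Tendsto r atTop (𝓝 α)) (hstep : ∀ k, r (k + 1) = r k + w k) (hw : ∀ k, 0 ≤ w k)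
    (hq : q < 1) (hdecay : ∀ k, w (k + 1) ≤ q * w k) (j : ℕ) :
    w j ≤ α - r j ∧ α - r j ≤ w j / (1 - q) := by
  have hq' : 0 < 1 - q := by linarith
  have hmono : Monotone r := monotone_nat_of_le_succ fun k => by linarith [hstep k, hw k]
  have hanti : Antitone fun k => r k + w k / (1 - q) := by
    refine antitone_nat_of_succ_le fun k => ?_
    have hsplit : w k / (1 - q) = w k + q * w k / (1 - q) := by field_simp; ring
    have := div_le_div_of_nonneg_right (hdecay k) hq'.le
    linarith [hstep k]
  have hle : ∀ k ≥ j, r k ≤ r j + w j / (1 - q) := fun k hk =>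
    (le_add_of_nonneg_right (div_nonneg (hw k) hq'.le)).trans (hanti hk)
  constructor
  · linarith [hstep j, hmono.ge_of_tendsto hr (j + 1)]
  · linarith [le_of_tendsto hr (eventually_atTop.2 ⟨j, hle⟩)]

theorem mul_le_mul_sqrt_of_sq_mul_le {M t c : ℝ} (hM : 0 ≤ M) (ht : 0 ≤ t) (hc : 0 ≤ c)
    (h : M ^ 2 * t ≤ c ^ 2) : M * t ≤ c * √t := by
  have hMs : M * √t ≤ c := by
    refine (pow_le_pow_iff_left₀ (by positivity) hc two_ne_zero).1 ?_
    rwa [mul_pow, Real.sq_sqrt ht]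
  calc M * t = M * √t * √t := by rw [mul_assoc, Real.mul_self_sqrt ht]
    _ ≤ c * √t := mul_le_mul_of_nonneg_right hMs (Real.sqrt_nonneg t)

theorem one_le_mul_sqrt_of_one_le_sq_mul {M t c : ℝ} (hM : 0 ≤ M) (hc : 0 ≤ c)
    (h : 1 ≤ c ^ 2 * M ^ 2 * t) : 1 ≤ c * M * √t := by
  have ht : 0 ≤ t := by
    by_contra! ht
    nlinarith [mul_nonneg (sq_nonneg c) (sq_nonneg M)]
  refine (pow_le_pow_iff_left₀ zero_le_one (by positivity) two_ne_zero).1 ?_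
  rwa [mul_pow, mul_pow, Real.sq_sqrt ht, one_pow]

theorem exists_succ_le_and_lt_of_exists_le {a : ℕ → ℝ} {x : ℝ} (h0 : x < a 0)
    (h : ∃ j, a j ≤ x) : ∃ i, a (i + 1) ≤ x ∧ x < a i := by
  classical
  obtain ⟨i, hi⟩ : ∃ i, Nat.find h = i + 1 :=
    Nat.exists_eq_add_one.2 (Nat.pos_of_ne_zero fun h' => (Nat.find_spec h).not_gt (h' ▸ h0))
  refine ⟨i, hi ▸ Nat.find_spec h, ?_⟩
  exact not_le.1 (Nat.find_min h (by omega))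

theorem nonneg_and_two_mul_lt_of_recurrence {e m : ℕ → ℤ} (he : ∀ j, 1 ≤ j → 3 ≤ e j)
    (hm0 : m 0 = 0) (hm1 : m 1 = 1) (hm : ∀ j, 1 ≤ j → m (j + 1) = e j * m j - m (j - 1)) :
    ∀ j, 0 ≤ m j ∧ 2 * m j < m (j + 1) := by
  intro j
  induction j with
  | zero => simp [hm0, hm1]
  | succ j ih =>
    have hrec : m (j + 2) = e (j + 1) * m (j + 1) - m j := hm (j + 1) (by omega)
    show 0 ≤ m (j + 1) ∧ 2 * m (j + 1) < m (j + 2)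
    have : 3 * m (j + 1) ≤ e (j + 1) * m (j + 1) :=
      mul_le_mul_of_nonneg_right (he _ (by omega)) (by omega)
    omega

theorem det_eq_one_of_recurrence {e m n : ℕ → ℤ}
    (hm0 : m 0 = 0) (hn0 : n 0 = -1) (hm1 : m 1 = 1) (hn1 : n 1 = 0)
    (hm : ∀ j, 1 ≤ j → m (j + 1) = e j * m j - m (j - 1))
    (hn : ∀ j, 1 ≤ j → n (j + 1) = e j * n j - n (j - 1)) :
    ∀ j, m j * n (j + 1) - m (j + 1) * n j = 1 := by
  intro j
  induction j with
  | zero => simp [hm0, hm1, hn0, hn1]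
  | succ j ih =>
    rw [hm (j + 1) (by omega), hn (j + 1) (by omega), Nat.add_sub_cancel]
    linear_combination ih

section Convergents

variable {m n : ℕ → ℤ} {a : ℕ → ℝ} {α : ℝ}

theorem one_le_cast_succ (hgrow : ∀ j, 0 ≤ m j ∧ 2 * m j < m (j + 1)) (j : ℕ) :
    (1 : ℝ) ≤ m (j + 1) := by
  have := hgrow j
  exact_mod_cast (by omega : 1 ≤ m (j + 1))

theorem div_succ_eq_div_add_one_div (hgrow : ∀ j, 0 ≤ m j ∧ 2 * m j < m (j + 1))
    (hdet : ∀ j, m j * n (j + 1) - m (j + 1) * n j = 1) (k : ℕ) :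
    (n (k + 2) : ℝ) / m (k + 2) = n (k + 1) / m (k + 1) + 1 / (m (k + 1) * m (k + 2)) := by
  have h1 := one_le_cast_succ hgrow k
  have h2 := one_le_cast_succ hgrow (k + 1)
  have hd : (m (k + 1) : ℝ) * n (k + 2) - m (k + 2) * n (k + 1) = 1 := by
    exact_mod_cast hdet (k + 1)
  field_simp
  linarith

theorem mul_sub_bounds (hm0 : m 0 = 0) (hm1 : m 1 = 1)
    (hgrow : ∀ j, 0 ≤ m j ∧ 2 * m j < m (j + 1))
    (hdet : ∀ j, m j * n (j + 1) - m (j + 1) * n j = 1)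
    (hα : Tendsto (fun j => (n j : ℝ) / m j) atTop (𝓝 α)) (j : ℕ) :
    1 ≤ m (j + 1) * ((m j : ℝ) * α - n j) ∧ 3 * (m (j + 1) * ((m j : ℝ) * α - n j)) ≤ 4 := by
  have hpos := one_le_cast_succ hgrow
  cases j with
  | zero =>
    have hn0 : n 0 = -1 := by have := hdet 0; rw [hm0, hm1] at this; omega
    simp [hm0, hn0, hm1]
    norm_num
  | succ j =>
    have hdecay : ∀ k,
        1 / ((m (k + 2) : ℝ) * m (k + 3)) ≤ 1 / 4 * (1 / (m (k + 1) * m (k + 2))) := by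
      intro k
      have h4 : (4 * m (k + 1) : ℝ) ≤ m (k + 3) := by
        have : 2 * m (k + 1) < m (k + 2) := (hgrow (k + 1)).2
        have : 0 ≤ m (k + 2) ∧ 2 * m (k + 2) < m (k + 3) := hgrow (k + 2)
        exact_mod_cast (by omega : 4 * m (k + 1) ≤ m (k + 3))
      have h1 := hpos k
      have h2 := hpos (k + 1)
      rw [div_mul_div_comm, div_le_div_iff₀ (by nlinarith) (by nlinarith)]
      nlinarith
    obtain ⟨hlow, hup⟩ := le_sub_and_sub_le_div_of_tendsto ((tendsto_add_atTop_iff_nat 1).2 hα)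
      (div_succ_eq_div_add_one_div hgrow hdet)
      (fun k => by have := hpos k; have := hpos (k + 1); positivity) (by norm_num) hdecay j
    have h1 := hpos j
    have h2 := hpos (j + 1)
    have hδ : (m (j + 1) : ℝ) * α - n (j + 1) = m (j + 1) * (α - n (j + 1) / m (j + 1)) := by
      field_simp
    rw [hδ]
    rw [div_le_iff₀ (by positivity)] at hlow
    rw [le_div_iff₀ (by norm_num), le_div_iff₀ (by positivity)] at hup
    constructor <;> linarith

theorem slope_sub_bounds (hm0 : m 0 = 0) (hm1 : m 1 = 1)
    (hgrow : ∀ j, 0 ≤ m j ∧ 2 * m j < m (j + 1))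
    (hdet : ∀ j, m j * n (j + 1) - m (j + 1) * n j = 1)
    (hα : Tendsto (fun j => (n j : ℝ) / m j) atTop (𝓝 α))
    (ha : ∀ j, a j = ((n (j + 1) : ℝ) - (n j : ℝ)) / ((m (j + 1) : ℝ) - (m j : ℝ))) (j : ℕ) :
    1 ≤ 3 * (m (j + 1) : ℝ) ^ 2 * (a j - α) ∧ (m (j + 1) : ℝ) ^ 2 * (a j - α) ≤ 3 := by
  have hM := one_le_cast_succ hgrow j
  have hM' : 2 * (m (j + 1) : ℝ) ≤ m (j + 2) := by exact_mod_cast (hgrow (j + 1)).2.le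
  have hmj : (0 : ℝ) ≤ m j := by exact_mod_cast (hgrow j).1
  have hmj' : 2 * (m j : ℝ) < m (j + 1) := by exact_mod_cast (hgrow j).2
  have hslope : a j - α =
      ((m j * α - n j) - (m (j + 1) * α - n (j + 1))) / ((m (j + 1) : ℝ) - m j) := by
    rw [ha j]
    field_simp [(by linarith : (m (j + 1) : ℝ) - m j ≠ 0)]
    ring
  have hδ := mul_sub_bounds hm0 hm1 hgrow hdet hα j
  have hδ' : 0 ≤ (m (j + 1) : ℝ) * α - n (j + 1) ∧
      3 * (m (j + 2) * ((m (j + 1) : ℝ) * α - n (j + 1))) ≤ 4 := by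
    obtain ⟨hl, hu⟩ := mul_sub_bounds hm0 hm1 hgrow hdet hα (j + 1)
    exact ⟨nonneg_of_mul_nonneg_right (zero_le_one.trans hl) (by linarith), hu⟩
  rw [hslope]
  generalize (m (j + 1) : ℝ) = M at *
  generalize ((m j : ℝ) * α - n j) = δ at *
  generalize (M * α - n (j + 1)) = δ' at *
  have h2 : M * (2 * M * δ') ≤ M * (m (j + 2) * δ') :=
    mul_le_mul_of_nonneg_left (mul_le_mul_of_nonneg_right hM' hδ'.1) (by linarith)
  constructor
  · rw [← mul_div_assoc, le_div_iff₀ (by linarith)]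
    nlinarith
  · rw [← mul_div_assoc, div_le_iff₀ (by linarith)]
    nlinarith

theorem exists_slope_le (hgrow : ∀ j, 0 ≤ m j ∧ 2 * m j < m (j + 1))
    (hslope : ∀ j, (m (j + 1) : ℝ) ^ 2 * (a j - α) ≤ 3) {x : ℝ} (hx : α < x) :
    ∃ j, a j ≤ x := by
  have hm : ∀ j : ℕ, (j : ℤ) ≤ m j := by
    intro j
    induction j with
    | zero => exact (hgrow 0).1
    | succ j ih => have := hgrow j; push_cast; omega
  obtain ⟨N, hN⟩ := exists_nat_gt (3 / (x - α))
  rw [div_lt_iff₀ (by linarith)] at hN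
  have hM : (N : ℝ) + 1 ≤ m (N + 1) := by exact_mod_cast hm (N + 1)
  refine ⟨N, ?_⟩
  have hMx : 3 < (m (N + 1) : ℝ) * (x - α) := by nlinarith
  nlinarith [hslope N]

theorem mul_sub_le_five_mul_sqrt (hm0 : m 0 = 0) (hm1 : m 1 = 1)
    (hgrow : ∀ j, 0 ≤ m j ∧ 2 * m j < m (j + 1))
    (hdet : ∀ j, m j * n (j + 1) - m (j + 1) * n j = 1)
    (hα : Tendsto (fun j => (n j : ℝ) / m j) atTop (𝓝 α))
    (ha : ∀ j, a j = ((n (j + 1) : ℝ) - (n j : ℝ)) / ((m (j + 1) : ℝ) - (m j : ℝ)))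
    {i : ℕ} {x : ℝ} (hl : a (i + 1) ≤ x) (hr : x ≤ a i) :
    (m (i + 1) : ℝ) * x - n (i + 1) ≤ 5 * √(x - α) := by
  have hM := one_le_cast_succ hgrow i
  have hM' : (1 : ℝ) ≤ m (i + 2) := one_le_cast_succ hgrow (i + 1)
  have hlow : 1 ≤ 3 * (m (i + 2) : ℝ) ^ 2 * (a (i + 1) - α) :=
    (slope_sub_bounds hm0 hm1 hgrow hdet hα ha (i + 1)).1
  have hup := (slope_sub_bounds hm0 hm1 hgrow hdet hα ha i).2
  have ht : 0 ≤ x - α := by nlinarith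
  have hlin : (m (i + 1) : ℝ) * (x - α) ≤ 2 * √(x - α) :=
    mul_le_mul_sqrt_of_sq_mul_le (by positivity) ht zero_le_two (by nlinarith)
  have hinv : 1 ≤ 2 * m (i + 2) * √(x - α) :=
    one_le_mul_sqrt_of_one_le_sq_mul (by positivity) zero_le_two (by nlinarith)
  have hδ : 3 * (m (i + 2) * ((m (i + 1) : ℝ) * α - n (i + 1))) ≤ 4 :=
    (mul_sub_bounds hm0 hm1 hgrow hdet hα (i + 1)).2
  have hδ' : (m (i + 1) : ℝ) * α - n (i + 1) ≤ 8 / 3 * √(x - α) := by nlinarith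
  calc (m (i + 1) : ℝ) * x - n (i + 1) = m (i + 1) * (x - α) + (m (i + 1) * α - n (i + 1)) := by
        ring
    _ ≤ 2 * √(x - α) + 8 / 3 * √(x - α) := add_le_add hlin hδ'
    _ ≤ 5 * √(x - α) := by linarith [Real.sqrt_nonneg (x - α)]

end Convergents

theorem stmt14 (e m n : ℕ → ℤ) (a : ℕ → ℝ) (α : ℝ) (η : ℝ → ℝ)
    (he : ∀ j, 1 ≤ j → 3 ≤ e j)
    (hm0 : m 0 = 0) (hn0 : n 0 = -1) (hm1 : m 1 = 1) (hn1 : n 1 = 0)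
    (hm : ∀ j, 1 ≤ j → m (j + 1) = e j * m j - m (j - 1))
    (hn : ∀ j, 1 ≤ j → n (j + 1) = e j * n j - n (j - 1))
    (ha : ∀ j, a j = ((n (j + 1) : ℝ) - (n j : ℝ)) / ((m (j + 1) : ℝ) - (m j : ℝ)))
    (hα : Tendsto (fun j => (n j : ℝ) / (m j : ℝ)) atTop (nhds α))
    (hη0 : ∀ x ≤ α, η x = 0)
    (hη1 : ∀ x, a 0 ≤ x → η x = 1)
    (hηj : ∀ j, 1 ≤ j → ∀ x, a j ≤ x → x ≤ a (j - 1) → η x = (m j : ℝ) * x - (n j : ℝ)) :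
    ∃ Ω > (0 : ℝ), ∀ x, α ≤ x → η x ≤ Ω * Real.sqrt (x - α) := by
  have hgrow := nonneg_and_two_mul_lt_of_recurrence he hm0 hm1 hm
  have hdet := det_eq_one_of_recurrence hm0 hn0 hm1 hn1 hm hn
  have hslope := slope_sub_bounds hm0 hm1 hgrow hdet hα ha
  refine ⟨5, by norm_num, fun x hx => ?_⟩
  rcases hx.eq_or_lt with rfl | hαx
  · rw [hη0 α le_rfl]
    positivity
  by_cases h0 : a 0 ≤ x
  · have h1 := (hslope 0).1
    simp only [zero_add, hm1, Int.cast_one, one_pow, mul_one] at h1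
    have : 1 ≤ 2 * 1 * √(x - α) :=
      one_le_mul_sqrt_of_one_le_sq_mul zero_le_one zero_le_two (by linarith)
    rw [hη1 x h0]
    linarith
  obtain ⟨i, hil, hir⟩ := exists_succ_le_and_lt_of_exists_le (not_le.1 h0)
    (exists_slope_le hgrow (fun j => (hslope j).2) hαx)
  rw [hηj (i + 1) (by omega) x hil hir.le]
  exact mul_sub_le_five_mul_sqrt hm0 hm1 hgrow hdet hα ha hil hir.le
end

section
/- In the case e_j = 3 for all j, (a_j - φ^{-2})/b_j² = (1/√5)·(φ^{4j+2} + 2 + φ^{-(4j+2)})/(φ^{4j+2} + 1) for all j ≥ 0. -/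
theorem stmt17 (a b : ℕ → ℝ) (φ : ℝ)
    (hφ : φ = (1 + Real.sqrt 5) / 2)
    (ha : ∀ j, a j = (φ ^ (2 * (j : ℤ) - 1) + φ ^ (-(2 * (j : ℤ) - 1)))
        / (φ ^ (2 * (j : ℤ) + 1) + φ ^ (-(2 * (j : ℤ) + 1))))
    (hb : ∀ j, b j = Real.sqrt 5 / (φ ^ (2 * (j : ℤ) + 1) + φ ^ (-(2 * (j : ℤ) + 1)))) :
    ∀ j, (a j - φ ^ (-2 : ℤ)) / (b j) ^ 2
      = (1 / Real.sqrt 5) *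
        (φ ^ (4 * (j : ℤ) + 2) + 2 + φ ^ (-(4 * (j : ℤ) + 2)))
          / (φ ^ (4 * (j : ℤ) + 2) + 1) := by
  intro j
  have hs5 : (0:ℝ) < Real.sqrt 5 := Real.sqrt_pos.mpr (by norm_num)
  have hs2 : Real.sqrt 5 ^ 2 = 5 := Real.sq_sqrt (by norm_num)
  have hs : Real.sqrt 5 = 2 * φ - 1 := by rw [hφ]; ring
  have hφpos : 0 < φ := by rw [hφ]; positivity
  have hφne : φ ≠ 0 := ne_of_gt hφpos
  have hφ2 : φ ^ 2 = φ + 1 := by nlinarith [hs2, hs]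
  set x : ℝ := φ ^ (2 * (j : ℤ) + 1) with hxdef
  have hxpos : 0 < x := zpow_pos hφpos _
  have hxne : x ≠ 0 := ne_of_gt hxpos
  have h2 : φ ^ (-2 : ℤ) = 2 - φ := by
    have hm : φ ^ (2 : ℤ) * (2 - φ) = 1 := by
      rw [show ((2:ℤ)) = ((2:ℕ):ℤ) by norm_num, zpow_natCast]
      linear_combination (1 - φ) * hφ2
    rw [zpow_neg, inv_eq_of_mul_eq_one_right hm]
  have e1 : φ ^ (2 * (j : ℤ) - 1) = x * (2 - φ) := by
    have h1 : φ ^ (2 * (j : ℤ) - 1) = x * φ ^ (-2 : ℤ) := by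
      rw [hxdef, ← zpow_add₀ hφne]
      congr 1; ring
    rw [h1, h2]
  have e2 : φ ^ (-(2 * (j : ℤ) - 1)) = x⁻¹ * (φ + 1) := by
    have h1 : φ ^ (-(2 * (j : ℤ) - 1)) = φ ^ (-(2 * (j:ℤ) + 1)) * φ ^ (2 : ℤ) := by
      rw [← zpow_add₀ hφne]
      congr 1; ring
    rw [h1, hxdef, ← zpow_neg,
      show ((2:ℤ)) = ((2:ℕ):ℤ) by norm_num, zpow_natCast, hφ2]
  have e3 : φ ^ (-(2 * (j : ℤ) + 1)) = x⁻¹ := by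
    rw [hxdef, ← zpow_neg]
  have e4 : φ ^ (4 * (j : ℤ) + 2) = x ^ 2 := by
    rw [hxdef, ← zpow_natCast (φ ^ (2 * (j:ℤ) + 1)) 2, ← zpow_mul]
    congr 1; push_cast; ring
  have e5 : φ ^ (-(4 * (j : ℤ) + 2)) = (x ^ 2)⁻¹ := by
    rw [← e4, ← zpow_neg]
  rw [ha, hb, e1, e2, e3, e4, e5, h2, hs]
  have hden : x + x⁻¹ ≠ 0 := by positivity
  have hden2 : x ^ 2 + 1 ≠ 0 := by positivity
  have h2φ : (2 * φ - 1) ≠ 0 := by rw [← hs]; exact ne_of_gt hs5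
  field_simp
  ring
end
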